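/- The first-power partial energy estimate fails on the bi-tree: for every constant C > 0 there exist an integer N ≥ 1, a measure ν on the boundary of the bi-tree T² of depth N, and a number ε > 0 such that E_ε[ν] = ∑_{α∈T² : V^ν(α) ≤ ε} (𝕀*ν(α))² > C·ε·|ν|. -/
import Mathlib


open Finset

def strings : ℕ → Finset (List Bool)
  | 0 => {([] : List Bool)}
  | N + 1 =>
      {([] : List Bool)} ∪ (strings N).image (List.cons true) ∪ (strings N).image (List.cons false)

/-- Vertices of the bi-tree `T²` of depth `N`: pairs of binary strings of length at most `N`,
ordered by `(α,β) ≤ (α',β')` iff `α' <+: α` and `β' <+: β`. -/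
def biVertices (N : ℕ) : Finset (List Bool × List Bool) := strings N ×ˢ strings N

/-- `𝕀 f (p) = ∑_{p' ≥ p} f p'`. -/
noncomputable def biI (N : ℕ) (f : List Bool × List Bool → ℝ) (p : List Bool × List Bool) : ℝ :=
  ∑ q ∈ (biVertices N).filter (fun q => q.1 <+: p.1 ∧ q.2 <+: p.2), f q

/-- `𝕀* f (p) = ∑_{p' ≤ p} f p'`. -/
noncomputable def biIstar (N : ℕ) (f : List Bool × List Bool → ℝ) (p : List Bool × List Bool) : ℝ :=
  ∑ q ∈ (biVertices N).filter (fun q => p.1 <+: q.1 ∧ p.2 <+: q.2), f q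

/-- The potential `V^μ = 𝕀 (𝕀* μ)` on the bi-tree. -/
noncomputable def biV (N : ℕ) (μ : List Bool × List Bool → ℝ) : List Bool × List Bool → ℝ :=
  biI N (biIstar N μ)

/-- The total mass `|μ|`. -/
noncomputable def biMass (N : ℕ) (μ : List Bool × List Bool → ℝ) : ℝ :=
  ∑ p ∈ biVertices N, μ p

/-- A measure on the boundary `∂T²`: a nonnegative function vanishing off pairs of strings
both of length exactly `N`. -/
def IsBiMeasureOnBoundary (N : ℕ) (μ : List Bool × List Bool → ℝ) : Prop :=
  (∀ p, 0 ≤ μ p) ∧ ∀ p, μ p ≠ 0 → p.1.length = N ∧ p.2.length = N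

/-- The energy `E[ν] = ∑_{α∈T²} (𝕀*ν(α))²`. -/
noncomputable def biEnergy (N : ℕ) (ν : List Bool × List Bool → ℝ) : ℝ :=
  ∑ p ∈ biVertices N, (biIstar N ν p) ^ 2

/-- The partial energy `E_ε[ν] = ∑_{α∈T² : V^ν(α) ≤ ε} (𝕀*ν(α))²`. -/
noncomputable def biPartialEnergy (N : ℕ) (ν : List Bool × List Bool → ℝ) (ε : ℝ) : ℝ :=
  ∑ p ∈ (biVertices N).filter (fun p => biV N ν p ≤ ε), (biIstar N ν p) ^ 2

/-- `cap(E) = inf { ∑ f² : f ≥ 0, 𝕀f ≥ 1 on E }` on the bi-tree of depth `N`. -/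
noncomputable def biCap (N : ℕ) (E : Set (List Bool × List Bool)) : ℝ :=
  sInf { t : ℝ | ∃ f : List Bool × List Bool → ℝ, (∀ p, 0 ≤ f p) ∧
    (∀ p ∈ E, 1 ≤ biI N f p) ∧ t = ∑ p ∈ biVertices N, (f p) ^ 2 }

/-- Superadditivity in each variable on the bi-tree of depth `N`. -/
def BiSuperadditive (N : ℕ) (g : List Bool × List Bool → ℝ) : Prop :=
  (∀ α β : List Bool, α.length < N → β.length ≤ N →
    g (α ++ [false], β) + g (α ++ [true], β) ≤ g (α, β)) ∧
  (∀ α β : List Bool, α.length ≤ N → β.length < N →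
    g (α, β ++ [false]) + g (α, β ++ [true]) ≤ g (α, β))

/- ### auxiliary lemmas -/

lemma mem_strings {N : ℕ} {l : List Bool} : l ∈ strings N ↔ l.length ≤ N := by
  induction N generalizing l with
  | zero => simp [strings, List.length_eq_zero_iff]
  | succ N ih =>
    simp only [strings, Finset.mem_union, Finset.mem_image, Finset.mem_singleton]
    constructor
    · rintro ((rfl | ⟨l', hl', rfl⟩) | ⟨l', hl', rfl⟩) <;> simp_all
    · intro h
      match l with
      | [] => exact Or.inl (Or.inl rfl)
      | true :: l' =>
        exact Or.inl (Or.inr ⟨l', ih.2 (by simpa [Nat.succ_le_succ_iff] using h), rfl⟩)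
      | false :: l' =>
        exact Or.inr ⟨l', ih.2 (by simpa [Nat.succ_le_succ_iff] using h), rfl⟩

lemma prefix_replicate {a b : ℕ} (h : a ≤ b) :
    List.replicate a false <+: List.replicate b false :=
  ⟨List.replicate (b - a) false, by rw [← List.replicate_add]; congr 1; omega⟩

lemma prefix_replicate_iff {l : List Bool} {i : ℕ} :
    l <+: List.replicate i false ↔ l.length ≤ i ∧ l = List.replicate l.length false := by
  constructor
  · intro h
    have hle : l.length ≤ i := by simpa using h.length_le
    refine ⟨hle, ?_⟩
    have := List.prefix_iff_eq_take.1 h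
    rwa [List.take_replicate, min_eq_left hle] at this
  · rintro ⟨h1, h2⟩
    rw [h2]; exact prefix_replicate h1

/-- The measure: unit point mass at `(0ⁿ, 0ⁿ)`. -/
noncomputable def pm (n : ℕ) : List Bool × List Bool → ℝ :=
  fun p => if p = (List.replicate n false, List.replicate n false) then 1 else 0

lemma pm_Istar (n : ℕ) (p : List Bool × List Bool) :
    biIstar n (pm n) p =
      if p.1 <+: List.replicate n false ∧ p.2 <+: List.replicate n false then 1 else 0 := by
  classical
  rw [biIstar]
  unfold pm
  rw [Finset.sum_ite_eq' _ ((List.replicate n false, List.replicate n false)) (fun _ => (1:ℝ))]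
  simp [biVertices, Finset.mem_filter, Finset.mem_product, mem_strings]

lemma card_prefix_filter (n a : ℕ) (ha : a ≤ n) :
    ((strings n).filter (fun l => l <+: List.replicate a false)).card = a + 1 := by
  have h : (strings n).filter (fun l => l <+: List.replicate a false)
      = (Finset.range (a+1)).image (fun k => List.replicate k false) := by
    ext l
    simp only [Finset.mem_filter, mem_strings, Finset.mem_image, Finset.mem_range,
      prefix_replicate_iff]
    constructor
    · rintro ⟨h1, h2, h3⟩; exact ⟨l.length, by omega, h3.symm⟩
    · rintro ⟨k, hk, rfl⟩
      simp only [List.length_replicate]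
      exact ⟨by omega, by omega, by simp⟩
  rw [h, Finset.card_image_of_injective _ (fun x y hxy => by
    simpa using congrArg List.length hxy), Finset.card_range]

lemma pm_V (n a b : ℕ) (ha : a ≤ n) (hb : b ≤ n) :
    biV n (pm n) (List.replicate a false, List.replicate b false) = (a + 1) * (b + 1) := by
  classical
  have hterm : ∀ q ∈ (biVertices n).filter
      (fun q => q.1 <+: (List.replicate a false, List.replicate b false).1 ∧
        q.2 <+: (List.replicate a false, List.replicate b false).2),
      biIstar n (pm n) q = 1 := by
    intro q hq
    simp only [Finset.mem_filter] at hq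
    rw [pm_Istar, if_pos ⟨hq.2.1.trans (prefix_replicate ha), hq.2.2.trans (prefix_replicate hb)⟩]
  rw [biV, biI, Finset.sum_congr rfl hterm, Finset.sum_const, nsmul_eq_mul, mul_one]
  simp only [Prod.fst, Prod.snd]
  have hfil : (strings n ×ˢ strings n).filter
      (fun q => q.1 <+: List.replicate a false ∧ q.2 <+: List.replicate b false)
      = ((strings n).filter (fun l => l <+: List.replicate a false)) ×ˢ
        ((strings n).filter (fun l => l <+: List.replicate b false)) := by
    ext q
    simp only [Finset.mem_filter, Finset.mem_product]
    tauto
  rw [biVertices, hfil, Finset.card_product,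
    card_prefix_filter n a ha, card_prefix_filter n b hb]
  push_cast; ring


/-- **The first-power partial energy estimate `E_ε[ν] ≤ C ε |ν|` fails on the bi-tree.** -/
theorem stmt10 : ∀ C : ℝ, 0 < C →
    ∃ N : ℕ, 1 ≤ N ∧ ∃ ν : List Bool × List Bool → ℝ, ∃ ε : ℝ,
      IsBiMeasureOnBoundary N ν ∧ 0 < ε ∧
      C * ε * biMass N ν < biPartialEnergy N ν ε := by
  classical
  intro C hC
  -- choose n with harmonic sum > C + 1
  obtain ⟨N₀, hN₀⟩ := (Filter.eventually_atTop).1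
    ((Real.tendsto_sum_range_one_div_nat_succ_atTop.eventually_gt_atTop (C + 1)))
  set n := max N₀ 1 with hn
  have hn1 : 1 ≤ n := le_max_right _ _
  have hH : C + 1 < ∑ i ∈ Finset.range (n+1), (1:ℝ)/(i+1) := hN₀ (n+1) (by omega)
  refine ⟨n, hn1, pm n, (n+1 : ℝ), ⟨?_, ?_⟩, by positivity, ?_⟩
  · intro p; unfold pm; split <;> norm_num
  · intro p hp
    unfold pm at hp
    split at hp
    · next h => rw [h]; simp
    · exact absurd rfl hp
  -- the mass is 1
  have hmass : biMass n (pm n) = 1 := by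
    rw [biMass]
    unfold pm
    rw [Finset.sum_ite_eq' _ ((List.replicate n false, List.replicate n false)) (fun _ => (1:ℝ))]
    simp [biVertices, Finset.mem_product, mem_strings]
  rw [hmass, mul_one]
  -- the good set S
  set P : Finset (ℕ × ℕ) := (Finset.range (n+1) ×ˢ Finset.range (n+1)).filter
    (fun ab => (ab.1+1)*(ab.2+1) ≤ n+1) with hP
  set S : Finset (List Bool × List Bool) :=
    P.image (fun ab => (List.replicate ab.1 false, List.replicate ab.2 false)) with hS
  have hmemP : ∀ ab ∈ P, ab.1 ≤ n ∧ ab.2 ≤ n ∧ (ab.1+1)*(ab.2+1) ≤ n+1 := by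
    intro ab hab
    simp only [hP, Finset.mem_filter, Finset.mem_product, Finset.mem_range] at hab
    omega
  -- S is included in the partial-energy index set
  have hsub : S ⊆ (biVertices n).filter (fun p => biV n (pm n) p ≤ (n+1:ℝ)) := by
    intro p hp
    simp only [hS, Finset.mem_image] at hp
    obtain ⟨ab, hab, rfl⟩ := hp
    obtain ⟨h1, h2, h3⟩ := hmemP ab hab
    simp only [Finset.mem_filter, biVertices, Finset.mem_product, mem_strings,
      List.length_replicate]
    refine ⟨⟨h1, h2⟩, ?_⟩
    rw [pm_V n ab.1 ab.2 h1 h2]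
    exact_mod_cast h3
  -- lower bound the partial energy by the cardinality of S
  have hE1 : (S.card : ℝ) ≤ biPartialEnergy n (pm n) (n+1) := by
    rw [biPartialEnergy]
    calc (S.card : ℝ) = ∑ p ∈ S, (biIstar n (pm n) p)^2 := by
          rw [Finset.sum_congr rfl (fun p hp => ?_), Finset.sum_const, nsmul_eq_mul, mul_one]
          simp only [hS, Finset.mem_image] at hp
          obtain ⟨ab, hab, rfl⟩ := hp
          obtain ⟨h1, h2, _⟩ := hmemP ab hab
          rw [pm_Istar, if_pos ⟨prefix_replicate h1, prefix_replicate h2⟩]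
          norm_num
      _ ≤ _ := Finset.sum_le_sum_of_subset_of_nonneg hsub (fun q _ _ => sq_nonneg _)
  -- card S = card P
  have hcardS : S.card = P.card := by
    rw [hS]
    apply Finset.card_image_of_injOn
    intro x _ y _ hxy
    have h1 := congrArg (fun p => (Prod.fst p).length) hxy
    have h2 := congrArg (fun p => (Prod.snd p).length) hxy
    simp only [List.length_replicate] at h1 h2
    exact Prod.ext h1 h2
  -- card P = Σ_a (n+1)/(a+1)
  have hcardP : P.card = ∑ a ∈ Finset.range (n+1), (n+1)/(a+1) := by
    have key : ∀ a : ℕ, (Finset.range (n+1)).filter (fun b => (a+1)*(b+1) ≤ n+1)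
        = Finset.range ((n+1)/(a+1)) := by
      intro a
      ext b
      simp only [Finset.mem_filter, Finset.mem_range]
      have hiff : b < (n+1)/(a+1) ↔ (b+1)*(a+1) ≤ n+1 := by
        rw [Nat.lt_iff_add_one_le, Nat.le_div_iff_mul_le (Nat.succ_pos a)]
      constructor
      · rintro ⟨_, h⟩
        rw [hiff]
        calc (b+1)*(a+1) = (a+1)*(b+1) := by ring
          _ ≤ n+1 := h
      · intro h
        rw [hiff] at h
        have hb1 : b + 1 ≤ (b+1)*(a+1) := Nat.le_mul_of_pos_right _ (Nat.succ_pos a)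
        constructor
        · omega
        · calc (a+1)*(b+1) = (b+1)*(a+1) := by ring
            _ ≤ n+1 := h
    rw [hP, Finset.card_eq_sum_ones, Finset.sum_filter, Finset.sum_product]
    refine Finset.sum_congr rfl (fun a _ => ?_)
    show (∑ y ∈ Finset.range (n+1), if (a+1)*(y+1) ≤ n+1 then 1 else 0) = (n+1)/(a+1)
    rw [← Finset.sum_filter, key a, Finset.sum_const, Finset.card_range, smul_eq_mul, mul_one]
  -- real lower bound for each term
  have hdiv : ∀ a ∈ Finset.range (n+1), ((n+1:ℝ))/(a+1) - 1 ≤ (((n+1)/(a+1) : ℕ) : ℝ) := by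
    intro a _
    have h1 : (n+1) < (a+1) * ((n+1)/(a+1)) + (a+1) := by
      have hd := Nat.div_add_mod (n+1) (a+1)
      have hm := Nat.mod_lt (n+1) (show 0 < a+1 by omega)
      omega
    have h2 : ((n+1:ℝ)) < ((a:ℝ)+1) * (((n+1)/(a+1) : ℕ) : ℝ) + ((a:ℝ)+1) := by
      exact_mod_cast h1
    have hap : (0:ℝ) < (a:ℝ)+1 := by positivity
    rw [sub_le_iff_le_add, div_le_iff₀ hap]
    nlinarith [h2]
  -- put everything together
  have hfinal : C * (n+1) < (S.card : ℝ) := by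
    rw [hcardS]
    have : ((P.card : ℝ)) = ∑ a ∈ Finset.range (n+1), (((n+1)/(a+1) : ℕ) : ℝ) := by
      rw [hcardP]; push_cast; rfl
    rw [this]
    have hlow : ∑ a ∈ Finset.range (n+1), (((n+1:ℝ))/(a+1) - 1)
        ≤ ∑ a ∈ Finset.range (n+1), (((n+1)/(a+1) : ℕ) : ℝ) :=
      Finset.sum_le_sum hdiv
    have heq : ∑ a ∈ Finset.range (n+1), (((n+1:ℝ))/(a+1) - 1)
        = (n+1) * (∑ a ∈ Finset.range (n+1), (1:ℝ)/(a+1)) - (n+1) := by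
      rw [Finset.sum_sub_distrib, Finset.mul_sum, Finset.sum_const, Finset.card_range,
        nsmul_eq_mul, mul_one]
      push_cast
      congr 1
      exact Finset.sum_congr rfl (fun a _ => by rw [mul_one_div])
    have hpos : (0:ℝ) < (n:ℝ)+1 := by positivity
    nlinarith [hlow, heq, hH, hpos]
  exact lt_of_lt_of_le hfinal hE1
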